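/- arXiv:1306.5304 — 4 statements merged into one kernel-verified Lean document; each statement's English description precedes it below -/
import Mathlib

section
/- Let Z ⊂ ℝ⁴ be a 2-dimensional subspace which is neither J-complex nor (−J)-complex, where J is the standard complex structure, and let Z^⊥ be its orthogonal complement. If the complex loci satisfy ℰ_Z = ℰ_{Z^⊥} (every J-complex line meeting Z also meets Z^⊥ and vice versa), then Z is Lagrangian with respect to the standard symplectic form. Conversely, if Z is Lagrangian then ℰ_Z = ℰ_{Z^⊥}. -/
/- Coordinates on ℝ⁴ in the order (x₁, x₂, y₁, y₂). -/

/-- The Euclidean dot product on ℝ⁴. -/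
def dot4 (u v : Fin 4 → ℝ) : ℝ := ∑ i, u i * v i

/-- The standard symplectic form `ω = dx₁∧dy₁ + dx₂∧dy₂`. -/
def omegaStd (u v : Fin 4 → ℝ) : ℝ := u 0 * v 2 - u 2 * v 0 + u 1 * v 3 - u 3 * v 1

/-- The standard complex structure `J` with `J∂_{x_j} = ∂_{y_j}`. -/
def Jm : Matrix (Fin 4) (Fin 4) ℝ :=
  !![0, 0, -1, 0; 0, 0, 0, -1; 1, 0, 0, 0; 0, 1, 0, 0]

/-! For `z ≠ 0` in `Z`, `span {z, J z}` is a complex line meeting `Z`. If it also meets `Zᗮ`, in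
some `a • z + b • J z ≠ 0`, then pairing with `z` kills the `J z`-term (`J` is skew) and leaves
`a * B z z = 0`, so `J z ∈ Zᗮ`: equal complex loci force `J Z ⊆ Zᗮ`, which is the Lagrangian
condition. Conversely, if `J Z ⊆ Zᗮ` then `J Z = Zᗮ` by counting dimensions, and a `J`-invariant
subspace meets `J Z` exactly when it meets `Z`. -/

open Matrix Module Submodule LinearMap.BilinForm

section ComplexStructure

variable {V : Type*} [AddCommGroup V] [Module ℝ V]

def complexLocus (J : V →ₗ[ℝ] V) (Z : Submodule ℝ V) : Set (Submodule ℝ V) :=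
  {E | finrank ℝ E = 2 ∧ (∀ w ∈ E, J w ∈ E) ∧ E ⊓ Z ≠ ⊥}

variable {J : V →ₗ[ℝ] V}

theorem complexLocus_eq_iff {Z W : Submodule ℝ V} :
    complexLocus J Z = complexLocus J W ↔
      ∀ E : Submodule ℝ V, finrank ℝ E = 2 → (∀ w ∈ E, J w ∈ E) → (E ⊓ Z ≠ ⊥ ↔ E ⊓ W ≠ ⊥) := by
  simp only [Set.ext_iff, complexLocus, Set.mem_ofPred_eq]
  exact forall_congr' fun E =>
    ⟨fun h h2 hJ => ⟨fun hZ => (h.mp ⟨h2, hJ, hZ⟩).2.2, fun hW => (h.mpr ⟨h2, hJ, hW⟩).2.2⟩,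
      fun h => and_congr_right fun h2 => and_congr_right fun hJ => h h2 hJ⟩

variable (hJ : ∀ v, J (J v) = -v)
include hJ

theorem injective_of_apply_apply_eq_neg : Function.Injective J := fun u v h => by
  simpa [hJ] using congrArg J h

theorem linearIndependent_pair_apply {v : V} (hv : v ≠ 0) : LinearIndependent ℝ ![v, J v] := by
  rw [LinearIndependent.pair_iff]
  intro s t hst
  have hJst : s • J v - t • v = 0 := by
    simpa [hJ, sub_eq_add_neg] using congrArg J hst
  have hsum : (s ^ 2 + t ^ 2) • v = 0 := by
    calc (s ^ 2 + t ^ 2) • v = s • (s • v + t • J v) - t • (s • J v - t • v) := by module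
      _ = 0 := by rw [hst, hJst]; simp
  have hsq : s ^ 2 + t ^ 2 = 0 := (smul_eq_zero.mp hsum).resolve_right hv
  constructor <;> nlinarith [sq_nonneg s, sq_nonneg t]

theorem finrank_span_pair_apply {v : V} (hv : v ≠ 0) : finrank ℝ (span ℝ {v, J v}) = 2 := by
  rw [← Matrix.range_cons_cons_empty v (J v) ![],
    finrank_span_eq_card (linearIndependent_pair_apply hJ hv), Fintype.card_fin]

theorem apply_mem_span_pair_apply {v w : V} (hw : w ∈ span ℝ {v, J v}) :
    J w ∈ span ℝ {v, J v} := by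
  obtain ⟨a, b, rfl⟩ := mem_span_pair.mp hw
  exact mem_span_pair.mpr ⟨-b, a, by simp [hJ]; module⟩

theorem inf_map_ne_bot_iff {E Z : Submodule ℝ V} (hE : ∀ w ∈ E, J w ∈ E) :
    E ⊓ Z.map J ≠ ⊥ ↔ E ⊓ Z ≠ ⊥ := by
  simp only [Submodule.ne_bot_iff, mem_inf, mem_map]
  constructor
  · rintro ⟨_, ⟨hzE, z, hz, rfl⟩, hz0⟩
    refine ⟨z, ⟨?_, hz⟩, fun h => hz0 (by simp [h])⟩
    simpa [hJ] using hE _ hzE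
  · rintro ⟨z, ⟨hzE, hz⟩, hz0⟩
    exact ⟨J z, ⟨hE z hzE, z, hz, rfl⟩,
      fun h => hz0 (injective_of_apply_apply_eq_neg hJ (by simpa using h))⟩

theorem complexLocus_map (Z : Submodule ℝ V) : complexLocus J (Z.map J) = complexLocus J Z := by
  ext E
  exact and_congr_right fun _ => and_congr_right fun hE => inf_map_ne_bot_iff hJ hE

end ComplexStructure

section CompatibleForm

variable {V : Type*} [AddCommGroup V] [Module ℝ V] {B : LinearMap.BilinForm ℝ V}
  {J : V →ₗ[ℝ] V} {Z : Submodule ℝ V}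

theorem apply_mem_orthogonal_of_span_pair_inf_ne_bot (hB : B.toQuadraticMap.Anisotropic)
    (hBJ : ∀ v, B v (J v) = 0) {z : V} (hz : z ∈ Z)
    (h : span ℝ {z, J z} ⊓ B.orthogonal Z ≠ ⊥) : J z ∈ B.orthogonal Z := by
  obtain ⟨w, ⟨hwE, hwZ⟩, hw0⟩ := (Submodule.ne_bot_iff _).mp h
  obtain ⟨a, b, rfl⟩ := mem_span_pair.mp hwE
  have ha : a * B z z = 0 := by simpa [hBJ] using hwZ z hz
  rcases mul_eq_zero.mp ha with rfl | hzz
  · have hb : b ≠ 0 := by rintro rfl; simp at hw0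
    simpa [hb] using (B.orthogonal Z).smul_mem b⁻¹ hwZ
  · simp [hB z hzz]

theorem map_le_orthogonal_of_complexLocus_eq (hB : B.toQuadraticMap.Anisotropic)
    (hJ : ∀ v, J (J v) = -v) (hBJ : ∀ v, B v (J v) = 0)
    (h : complexLocus J Z = complexLocus J (B.orthogonal Z)) : Z.map J ≤ B.orthogonal Z := by
  rintro _ ⟨z, hz, rfl⟩
  rcases eq_or_ne z 0 with rfl | hz0
  · simp
  have hline : span ℝ {z, J z} ∈ complexLocus J Z :=
    ⟨finrank_span_pair_apply hJ hz0, fun _ => apply_mem_span_pair_apply hJ,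
      (Submodule.ne_bot_iff _).mpr ⟨z, ⟨subset_span (by simp), hz⟩, hz0⟩⟩
  rw [h] at hline
  exact apply_mem_orthogonal_of_span_pair_inf_ne_bot hB hBJ hz hline.2.2

theorem map_eq_orthogonal_of_map_le_orthogonal [FiniteDimensional ℝ V] (hB : B.Nondegenerate)
    (hJ : ∀ v, J (J v) = -v) (hdim : finrank ℝ V = 2 * finrank ℝ Z)
    (hiso : Z.map J ≤ B.orthogonal Z) : Z.map J = B.orthogonal Z := by
  refine eq_of_le_of_finrank_eq hiso ?_
  rw [← (equivMapOfInjective J (injective_of_apply_apply_eq_neg hJ) Z).finrank_eq,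
    finrank_orthogonal hB]
  omega

theorem complexLocus_eq_complexLocus_orthogonal_iff [FiniteDimensional ℝ V]
    (hB : B.toQuadraticMap.Anisotropic) (hJ : ∀ v, J (J v) = -v) (hBJ : ∀ v, B v (J v) = 0)
    (hdim : finrank ℝ V = 2 * finrank ℝ Z) :
    complexLocus J Z = complexLocus J (B.orthogonal Z) ↔ Z.map J ≤ B.orthogonal Z := by
  refine ⟨map_le_orthogonal_of_complexLocus_eq hB hJ hBJ, fun hiso => ?_⟩
  have hB' : B.Nondegenerate := .ofSeparatingLeft (separatingLeft_of_anisotropic hB)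
  rw [← map_eq_orthogonal_of_map_le_orthogonal hB' hJ hdim hiso, complexLocus_map hJ]

end CompatibleForm

lemma Jm_mulVec (v : Fin 4 → ℝ) : Jm *ᵥ v = ![-v 2, -v 3, v 0, v 1] := by
  funext i
  fin_cases i <;> simp [Jm, Matrix.mulVec, dotProduct, Fin.sum_univ_four]

lemma Jm_mulVec_Jm_mulVec (v : Fin 4 → ℝ) : Jm *ᵥ (Jm *ᵥ v) = -v := by
  funext i
  fin_cases i <;> simp [Jm_mulVec]

lemma omegaStd_eq_neg_dot4 (u v : Fin 4 → ℝ) : omegaStd u v = -dot4 u (Jm *ᵥ v) := by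
  simp [omegaStd, dot4, Jm_mulVec, Fin.sum_univ_four]
  ring

lemma dot4_Jm_mulVec_self (v : Fin 4 → ℝ) : dot4 v (Jm *ᵥ v) = 0 := by
  rw [← neg_eq_zero, ← omegaStd_eq_neg_dot4, omegaStd]
  ring

theorem complex_loci_equal_iff_lagrangian_general
    (Z Zp : Submodule ℝ (Fin 4 → ℝ))
    (hdim : Module.finrank ℝ Z = 2)
    (hperp : ∀ w, w ∈ Zp ↔ ∀ z ∈ Z, dot4 z w = 0) :
    (∀ E : Submodule ℝ (Fin 4 → ℝ), Module.finrank ℝ E = 2 →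
        (∀ w ∈ E, Jm.mulVec w ∈ E) → (E ⊓ Z ≠ ⊥ ↔ E ⊓ Zp ≠ ⊥)) ↔
      (∀ a ∈ Z, ∀ b ∈ Z, omegaStd a b = 0) := by
  set B : LinearMap.BilinForm ℝ (Fin 4 → ℝ) := dotProductBilin ℝ ℝ
  obtain rfl : Zp = B.orthogonal Z := Submodule.ext hperp
  have hLag : (∀ a ∈ Z, ∀ b ∈ Z, omegaStd a b = 0) ↔ Z.map Jm.mulVecLin ≤ B.orthogonal Z := by
    rw [Submodule.map_le_iff_le_comap]
    simp only [SetLike.le_def, mem_comap, mem_orthogonal_iff, omegaStd_eq_neg_dot4, neg_eq_zero]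
    exact ⟨fun h b hb a ha => h a ha b hb, fun h a ha b hb => h hb a ha⟩
  rw [hLag]
  exact complexLocus_eq_iff.symm.trans
    (complexLocus_eq_complexLocus_orthogonal_iff (B := B) (J := Jm.mulVecLin)
      (fun v (hv : v ⬝ᵥ v = 0) => dotProduct_self_eq_zero.mp hv) Jm_mulVec_Jm_mulVec
      dot4_Jm_mulVec_self (by simp [hdim]))

/-- For a 2-plane `Z` which is not `J`-invariant (i.e. neither `J`-complex nor `(−J)`-complex),
the complex loci of `Z` and of its orthogonal complement `Z^⊥` coincide — every `J`-complex
line meets `Z` nontrivially iff it meets `Z^⊥` nontrivially — if and only if `Z` is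
Lagrangian for the standard symplectic form. -/
theorem complex_loci_equal_iff_lagrangian
    (Z Zp : Submodule ℝ (Fin 4 → ℝ))
    (hdim : Module.finrank ℝ Z = 2)
    (hperp : ∀ w, w ∈ Zp ↔ ∀ z ∈ Z, dot4 z w = 0)
    (hnotJ : ¬ (∀ w ∈ Z, Jm.mulVec w ∈ Z)) :
    (∀ E : Submodule ℝ (Fin 4 → ℝ), Module.finrank ℝ E = 2 →
        (∀ w ∈ E, Jm.mulVec w ∈ E) → (E ⊓ Z ≠ ⊥ ↔ E ⊓ Zp ≠ ⊥)) ↔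
      (∀ a ∈ Z, ∀ b ∈ Z, omegaStd a b = 0) :=
  complex_loci_equal_iff_lagrangian_general Z Zp hdim hperp
end

section
/- Let E, E' be distinct J-complex lines in ℝ⁴, where J is the standard complex structure, and let K' be the standard orthogonal complex structure with JK' = −K'J. If E' = E^⊥ then the Lagrangian loci Λ⁺_E and Λ⁺_{E'} in ℙ(K') coincide, while if E' ≠ E^⊥ then Λ⁺_E ∩ Λ⁺_{E'} consists of exactly two K'-complex planes. -/
/-- The orthogonal complex structure `K'` with `JK' = −K'J`. -/
def K'm : Matrix (Fin 4) (Fin 4) ℝ :=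
  !![0, -1, 0, 0; 1, 0, 0, 0; 0, 0, 0, 1; 0, 0, -1, 0]

/-- A `J`-complex line. -/
def IsJLine (E : Submodule ℝ (Fin 4 → ℝ)) : Prop :=
  Module.finrank ℝ E = 2 ∧ ∀ w ∈ E, Jm.mulVec w ∈ E

/-- A `K'`-complex line. -/
def IsK'Line (F : Submodule ℝ (Fin 4 → ℝ)) : Prop :=
  Module.finrank ℝ F = 2 ∧ ∀ w ∈ F, K'm.mulVec w ∈ F

/-- The Lagrangian locus `Λ⁺_E ⊆ ℙ(K')` of a `J`-complex line `E`. -/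
def LagLocus (E : Submodule ℝ (Fin 4 → ℝ)) : Set (Submodule ℝ (Fin 4 → ℝ)) :=
  {F | IsK'Line F ∧ Module.finrank ℝ ↥(F ⊓ E) = 1}

open Submodule Module

section ComplexStructure

variable {V : Type*} [AddCommGroup V] [Module ℝ V] {f g : V →ₗ[ℝ] V} {S T : Submodule ℝ V}
  {v w : V}

def complexLine (f : V →ₗ[ℝ] V) (v : V) : Submodule ℝ V := span ℝ {v, f v}

def IsComplexLine (f : V →ₗ[ℝ] V) (S : Submodule ℝ V) : Prop :=
  finrank ℝ S = 2 ∧ ∀ w ∈ S, f w ∈ S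

lemma self_mem_complexLine : v ∈ complexLine f v := subset_span (by simp)

lemma apply_mem_complexLine : f v ∈ complexLine f v := subset_span (by simp)

lemma complexLine_le (hS : ∀ w ∈ S, f w ∈ S) (hv : v ∈ S) : complexLine f v ≤ S := by
  rw [complexLine, span_le]
  rintro _ (rfl | rfl)
  exacts [hv, hS v hv]

lemma apply_mem_complexLine_of_mem (hf : ∀ x, f (f x) = -x) (hw : w ∈ complexLine f v) :
    f w ∈ complexLine f v := by
  obtain ⟨a, b, rfl⟩ := mem_span_pair.mp hw
  exact mem_span_pair.mpr ⟨-b, a, by simp [hf]; module⟩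

lemma linearIndependent_pair_apply_s8 (hf : ∀ x, f (f x) = -x) (hv : v ≠ 0) :
    LinearIndependent ℝ ![v, f v] := by
  refine LinearIndependent.pair_iff.mpr fun s t h => ?_
  have h' : s • f v - t • v = 0 := by simpa [hf, sub_eq_add_neg, add_comm] using congrArg f h
  have hN : (s ^ 2 + t ^ 2) • v = 0 := by linear_combination (norm := module) s • h - t • h'
  have := (smul_eq_zero.mp hN).resolve_right hv
  constructor <;> nlinarith [sq_nonneg s, sq_nonneg t]

lemma isComplexLine_complexLine (hf : ∀ x, f (f x) = -x) (hv : v ≠ 0) :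
    IsComplexLine f (complexLine f v) := by
  refine ⟨?_, fun w hw => apply_mem_complexLine_of_mem hf hw⟩
  have := finrank_span_eq_card (linearIndependent_pair_apply_s8 hf hv)
  rwa [Matrix.range_cons_cons_empty, Fintype.card_fin] at this

lemma IsComplexLine.exists_ne_zero (hS : IsComplexLine f S) : ∃ v ∈ S, v ≠ 0 := by
  refine (Submodule.ne_bot_iff S).mp fun h => ?_
  have := hS.1
  rw [h, finrank_bot] at this
  omega

lemma IsComplexLine.eq_complexLine (hf : ∀ x, f (f x) = -x) (hS : IsComplexLine f S)
    (hv : v ∈ S) (hv0 : v ≠ 0) : S = complexLine f v :=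
  have : FiniteDimensional ℝ S := Module.finite_of_finrank_eq_succ hS.1
  (eq_of_le_of_finrank_le (complexLine_le hS.2 hv)
    (by rw [hS.1, (isComplexLine_complexLine hf hv0).1])).symm

lemma IsComplexLine.inf_eq_bot (hf : ∀ x, f (f x) = -x) (hS : IsComplexLine f S)
    (hT : IsComplexLine f T) (hne : S ≠ T) : S ⊓ T = ⊥ := by
  by_contra h
  obtain ⟨z, ⟨hzS, hzT⟩, hz⟩ := (Submodule.ne_bot_iff _).mp h
  exact hne ((hS.eq_complexLine hf hzS hz).trans (hT.eq_complexLine hf hzT hz).symm)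

lemma complexLine_smul {c : ℝ} (hc : c ≠ 0) : complexLine f (c • v) = complexLine f v := by
  have := span_smul_eq_of_isUnit ({v, f v} : Set V) c hc.isUnit
  rwa [Set.smul_set_insert, Set.smul_set_singleton, ← map_smul] at this

lemma complexLine_apply (hf : ∀ x, f (f x) = -x) : complexLine f (f v) = complexLine f v := by
  refine le_antisymm
    (complexLine_le (fun _ => apply_mem_complexLine_of_mem hf) apply_mem_complexLine)
    (complexLine_le (fun _ => apply_mem_complexLine_of_mem hf) ?_)
  simpa [hf] using neg_mem (apply_mem_complexLine (f := f) (v := f v))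

lemma eq_zero_of_quaternion_comb (hf : ∀ x, f (f x) = -x) (hg : ∀ x, g (g x) = -x)
    (hgf : ∀ x, g (f x) = -f (g x)) (hv : v ≠ 0) {a b c d : ℝ}
    (h : a • v + b • f v + c • g v + d • f (g v) = 0) : a = 0 ∧ b = 0 ∧ c = 0 ∧ d = 0 := by
  -- multiply by the conjugate quaternion `a - b f - c g - d fg`
  have hconj := congrArg (fun x => a • x - b • f x - c • g x - d • f (g x)) h
  simp only [map_add, map_smul, map_neg, map_zero, smul_zero, sub_zero, hf, hg, hgf,
    neg_neg] at hconj
  have hN : (a ^ 2 + b ^ 2 + c ^ 2 + d ^ 2) • v = 0 := by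
    rw [← hconj]; module
  have := (smul_eq_zero.mp hN).resolve_right hv
  refine ⟨?_, ?_, ?_, ?_⟩ <;> nlinarith [sq_nonneg a, sq_nonneg b, sq_nonneg c, sq_nonneg d]

lemma apply_notMem_complexLine (hf : ∀ x, f (f x) = -x) (hg : ∀ x, g (g x) = -x)
    (hgf : ∀ x, g (f x) = -f (g x)) (hv : v ≠ 0) : g v ∉ complexLine f v := fun h => by
  obtain ⟨a, b, hab⟩ := mem_span_pair.mp h
  have := eq_zero_of_quaternion_comb hf hg hgf hv (a := a) (b := b) (c := -1) (d := 0)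
    (by rw [hab]; module)
  norm_num at this

lemma IsComplexLine.finrank_inf_le_one (hf : ∀ x, f (f x) = -x) (hg : ∀ x, g (g x) = -x)
    (hgf : ∀ x, g (f x) = -f (g x)) (hS : IsComplexLine f S) (hT : IsComplexLine g T) :
    finrank ℝ ↥(S ⊓ T) ≤ 1 := by
  by_contra! h
  have : FiniteDimensional ℝ S := Module.finite_of_finrank_eq_succ hS.1
  have : FiniteDimensional ℝ T := Module.finite_of_finrank_eq_succ hT.1
  have hST : S ⊓ T = S := eq_of_le_of_finrank_le inf_le_left (by rw [hS.1]; omega)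
  have hTS : S ⊓ T = T := eq_of_le_of_finrank_le inf_le_right (by rw [hT.1]; omega)
  obtain ⟨v, hvS, hv⟩ := hS.exists_ne_zero
  have hgv : g v ∈ S := by
    rw [← hST, hTS] at hvS ⊢
    exact hT.2 v hvS
  exact apply_notMem_complexLine hf hg hgf hv (hS.eq_complexLine hf hvS hv ▸ hgv)

lemma injective_of_apply_apply_eq_neg_s8 (hg : ∀ x, g (g x) = -x) : Function.Injective g :=
  fun x y hxy => by simpa [hg] using congrArg g hxy

lemma IsComplexLine.map (hg : ∀ x, g (g x) = -x) (hgf : ∀ x, g (f x) = -f (g x))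
    (hS : IsComplexLine f S) : IsComplexLine f (S.map g) := by
  have hinj := injective_of_apply_apply_eq_neg_s8 hg
  refine ⟨(Submodule.equivMapOfInjective g hinj S).finrank_eq.symm.trans hS.1, ?_⟩
  rintro _ ⟨x, hx, rfl⟩
  exact ⟨-f x, neg_mem (hS.2 x hx), by simp [hgf]⟩

lemma exists_quaternion_coords (hf : ∀ x, f (f x) = -x) (hg : ∀ x, g (g x) = -x)
    (hgf : ∀ x, g (f x) = -f (g x)) (hV : finrank ℝ V = 4) (hv : v ≠ 0) (u : V) :
    ∃ a b c d : ℝ, a • v + b • f v + c • g v + d • f (g v) = u := by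
  have hind : LinearIndependent ℝ ![v, f v, g v, f (g v)] := by
    refine Fintype.linearIndependent_iff.mpr fun k hk i => ?_
    simp only [Fin.sum_univ_four, Matrix.cons_val] at hk
    have := eq_zero_of_quaternion_comb hf hg hgf hv hk
    fin_cases i <;> simp [this]
  have hu : u ∈ span ℝ (Set.range ![v, f v, g v, f (g v)]) := by
    rw [hind.span_eq_top_of_card_eq_finrank (by simp [hV])]
    trivial
  obtain ⟨k, hk⟩ := (mem_span_range_iff_exists_fun ℝ).mp hu
  exact ⟨k 0, k 1, k 2, k 3, by simpa [Fin.sum_univ_four] using hk⟩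

lemma IsComplexLine.exists_apply_add_mem (hf : ∀ x, f (f x) = -x) (hg : ∀ x, g (g x) = -x)
    (hgf : ∀ x, g (f x) = -f (g x)) (hV : finrank ℝ V = 4) (hS : IsComplexLine f S)
    (hv : v ≠ 0) (hdisj : complexLine f v ⊓ S = ⊥) :
    ∃ p q : ℝ, g v + p • v + q • f v ∈ S := by
  obtain ⟨u, huS, hu⟩ := hS.exists_ne_zero
  obtain ⟨a, b, c, d, rfl⟩ := exists_quaternion_coords hf hg hgf hV hv u
  have hN : c ^ 2 + d ^ 2 ≠ 0 := by
    intro hN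
    obtain ⟨rfl, rfl⟩ : c = 0 ∧ d = 0 := by constructor <;> nlinarith [sq_nonneg c, sq_nonneg d]
    refine hu ((Submodule.eq_bot_iff _).mp hdisj _ ⟨mem_span_pair.mpr ⟨a, b, ?_⟩, huS⟩)
    module
  -- `c • u - d • f u` kills the `f (g v)` component of `u`
  refine ⟨(a * c + b * d) / (c ^ 2 + d ^ 2), (b * c - a * d) / (c ^ 2 + d ^ 2), ?_⟩
  convert S.smul_mem (c ^ 2 + d ^ 2)⁻¹ (sub_mem (S.smul_mem c huS) (S.smul_mem d (hS.2 _ huS)))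
    using 1
  simp only [map_add, map_smul, hf]
  match_scalars <;> field_simp <;> ring

lemma exists_sq_sub_sq_eq_and_two_mul_eq (p q : ℝ) :
    ∃ α β : ℝ, α ^ 2 - β ^ 2 = p ∧ 2 * α * β = q := by
  obtain ⟨z, hz⟩ := IsAlgClosed.exists_pow_nat_eq (⟨p, q⟩ : ℂ) two_pos
  refine ⟨z.re, z.im, ?_, ?_⟩
  · simpa [sq] using congrArg Complex.re hz
  · have := congrArg Complex.im hz
    simp only [sq, Complex.mul_im] at this
    linarith

lemma IsComplexLine.exists_apply_add_smul_self_mem (hf : ∀ x, f (f x) = -x)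
    (hgf : ∀ x, g (f x) = -f (g x)) (hS : IsComplexLine f S) (hv : v ≠ 0) {p q : ℝ}
    (hpq : p ≠ 0 ∨ q ≠ 0) (hu : g v + p • v + q • f v ∈ S) :
    ∃ w ∈ complexLine f v, w ≠ 0 ∧ ∃ r : ℝ, r ≠ 0 ∧ g w + r • w ∈ S := by
  -- `α + iβ` is a square root of `p + iq`
  obtain ⟨α, β, rfl, rfl⟩ := exists_sq_sub_sq_eq_and_two_mul_eq p q
  have hαβ : ¬(α = 0 ∧ β = 0) := by rintro ⟨rfl, rfl⟩; simp at hpq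
  refine ⟨α • v + β • f v, mem_span_pair.mpr ⟨α, β, rfl⟩, fun h => hαβ ?_,
    α ^ 2 + β ^ 2, fun h => hαβ ?_, ?_⟩
  · exact LinearIndependent.pair_iff.mp (linearIndependent_pair_apply_s8 hf hv) α β h
  · constructor <;> nlinarith [sq_nonneg α, sq_nonneg β]
  · convert sub_mem (S.smul_mem α hu) (S.smul_mem β (hS.2 _ hu)) using 1
    simp only [map_add, map_smul, hf, hgf]
    module

lemma apply_add_smul_ne_zero (hf : ∀ x, f (f x) = -x) (hg : ∀ x, g (g x) = -x)
    (hgf : ∀ x, g (f x) = -f (g x)) (hv : v ≠ 0) (r : ℝ) : g v + r • v ≠ 0 := fun h =>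
  apply_notMem_complexLine hf hg hgf hv
    (mem_span_pair.mpr ⟨-r, 0, by rw [eq_neg_of_add_eq_zero_left h]; module⟩)

lemma eq_zero_or_eq_zero_of_inf_ne_bot (hf : ∀ x, f (f x) = -x) (hg : ∀ x, g (g x) = -x)
    (hgf : ∀ x, g (f x) = -f (g x)) (hv : v ≠ 0) {r X Y : ℝ} (hr : r ≠ 0)
    (h : complexLine g (X • v + Y • f v) ⊓ complexLine f (g v + r • v) ≠ ⊥) :
    X = 0 ∨ Y = 0 := by
  obtain ⟨z, ⟨hzg, hzf⟩, hz⟩ := (Submodule.ne_bot_iff _).mp h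
  obtain ⟨s, t, rfl⟩ := mem_span_pair.mp hzg
  obtain ⟨x, y, hxy⟩ := mem_span_pair.mp hzf
  have hgw : g (X • v + Y • f v) = X • g v - Y • f (g v) := by
    simp only [map_add, map_smul, hgf]; module
  simp only [hgw, map_add, map_smul] at hxy hz
  -- coordinates: `s X = x r`, `s Y = y r`, `t X = x`, `-t Y = y`
  obtain ⟨e₁, e₂, e₃, e₄⟩ := eq_zero_of_quaternion_comb hf hg hgf hv
    (a := s * X - x * r) (b := s * Y - y * r) (c := t * X - x) (d := -(t * Y) - y)
    (by linear_combination (norm := module) -hxy)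
  have ht : t ≠ 0 := by
    rintro rfl
    apply hz
    rw [← hxy, show x = 0 by linarith, show y = 0 by linarith]
    module
  have : t * r * (X * Y) = 0 := by
    linear_combination (X * e₂ - Y * e₁ - r * X * e₄ + r * Y * e₃) / 2
  simpa [ht, hr] using this

lemma complexLine_inf_ne_bot_iff (hf : ∀ x, f (f x) = -x) (hg : ∀ x, g (g x) = -x)
    (hgf : ∀ x, g (f x) = -f (g x)) (hv : v ≠ 0) {r : ℝ} (hr : r ≠ 0)
    (hw : w ∈ complexLine f v) (hw0 : w ≠ 0) :
    complexLine g w ⊓ complexLine f (g v + r • v) ≠ ⊥ ↔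
      complexLine g w = complexLine g v ∨ complexLine g w = complexLine g (f v) := by
  have hu := apply_add_smul_ne_zero hf hg hgf hv r
  constructor
  · intro h
    obtain ⟨X, Y, rfl⟩ := mem_span_pair.mp hw
    rcases eq_zero_or_eq_zero_of_inf_ne_bot hf hg hgf hv hr h with rfl | rfl
    · have hY : Y ≠ 0 := by rintro rfl; simp at hw0
      simpa using Or.inr (complexLine_smul (f := g) (v := f v) hY)
    · have hX : X ≠ 0 := by rintro rfl; simp at hw0
      simpa using Or.inl (complexLine_smul (f := g) (v := v) hX)
  · rintro (h | h) <;> rw [h, Submodule.ne_bot_iff]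
    · refine ⟨g v + r • v, ⟨mem_span_pair.mpr ⟨r, 1, by module⟩, self_mem_complexLine⟩, hu⟩
    · refine ⟨f (g v + r • v), ⟨mem_span_pair.mpr ⟨r, -1, ?_⟩, apply_mem_complexLine⟩, ?_⟩
      · simp only [map_add, map_smul, hgf]; module
      · exact (map_ne_zero_iff _ (injective_of_apply_apply_eq_neg_s8 hf)).mpr hu

lemma IsComplexLine.eq_map_of_apply_mem (hf : ∀ x, f (f x) = -x) (hg : ∀ x, g (g x) = -x)
    (hgf : ∀ x, g (f x) = -f (g x)) (hS : IsComplexLine f S) (hT : IsComplexLine f T)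
    (hv : v ∈ S) (hv0 : v ≠ 0) (hgv : g v ∈ T) : T = S.map g := by
  have hgv0 : g v ≠ 0 := (map_ne_zero_iff _ (injective_of_apply_apply_eq_neg_s8 hg)).mpr hv0
  rw [hT.eq_complexLine hf hgv hgv0,
    (hS.map hg hgf).eq_complexLine hf (mem_map_of_mem hv) hgv0]

lemma complexLine_ne_complexLine_apply (hf : ∀ x, f (f x) = -x) (hg : ∀ x, g (g x) = -x)
    (hgf : ∀ x, g (f x) = -f (g x)) (hv : v ≠ 0) : complexLine g v ≠ complexLine g (f v) :=
  fun h => apply_notMem_complexLine hg hf (fun x => by rw [hgf, neg_neg]) hv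
    (h ▸ self_mem_complexLine)

end ComplexStructure

open scoped Matrix

local notation "𝐉" => Matrix.mulVecLin Jm
local notation "𝐊" => Matrix.mulVecLin K'm

lemma Jm_mul_Jm : Jm * Jm = -1 := by
  ext i j; fin_cases i <;> fin_cases j <;> simp [Jm, Matrix.mul_apply, Fin.sum_univ_four]

lemma K'm_mul_K'm : K'm * K'm = -1 := by
  ext i j; fin_cases i <;> fin_cases j <;> simp [K'm, Matrix.mul_apply, Fin.sum_univ_four]

lemma K'm_mul_Jm : K'm * Jm = -(Jm * K'm) := by
  ext i j; fin_cases i <;> fin_cases j <;> simp [Jm, K'm, Matrix.mul_apply, Fin.sum_univ_four]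

lemma J_sq (x : Fin 4 → ℝ) : 𝐉 (𝐉 x) = -x := by
  simp [Matrix.mulVec_mulVec, Jm_mul_Jm, Matrix.neg_mulVec]

lemma K'_sq (x : Fin 4 → ℝ) : 𝐊 (𝐊 x) = -x := by
  simp [Matrix.mulVec_mulVec, K'm_mul_K'm, Matrix.neg_mulVec]

lemma K'_J_anticomm (x : Fin 4 → ℝ) : 𝐊 (𝐉 x) = -𝐉 (𝐊 x) := by
  simp [Matrix.mulVec_mulVec, K'm_mul_Jm, Matrix.neg_mulVec]

lemma J_K'_anticomm (x : Fin 4 → ℝ) : 𝐉 (𝐊 x) = -𝐊 (𝐉 x) := by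
  rw [K'_J_anticomm, neg_neg]

lemma IsJLine.isComplexLine {E : Submodule ℝ (Fin 4 → ℝ)} (hE : IsJLine E) :
    IsComplexLine 𝐉 E := hE

lemma IsK'Line.isComplexLine {F : Submodule ℝ (Fin 4 → ℝ)} (hF : IsK'Line F) :
    IsComplexLine 𝐊 F := hF

lemma dot4_mulVec_K'm_eq_zero {E : Submodule ℝ (Fin 4 → ℝ)} (hE : IsJLine E) {z x : Fin 4 → ℝ}
    (hz : z ∈ E) (hx : x ∈ E) : dot4 z (K'm *ᵥ x) = 0 := by
  obtain ⟨v, hvE, hv⟩ := hE.isComplexLine.exists_ne_zero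
  rw [hE.isComplexLine.eq_complexLine J_sq hvE hv] at hz hx
  obtain ⟨a, b, rfl⟩ := mem_span_pair.mp hz
  obtain ⟨c, d, rfl⟩ := mem_span_pair.mp hx
  simp [dot4, Fin.sum_univ_four, Jm, K'm, Matrix.mulVec, dotProduct]
  ring

lemma perp_eq_map_K' {E Ep : Submodule ℝ (Fin 4 → ℝ)} (hE : IsJLine E)
    (hperp : ∀ w, w ∈ Ep ↔ ∀ z ∈ E, dot4 z w = 0) : Ep = E.map 𝐊 := by
  have hle : E.map 𝐊 ≤ Ep := by
    rintro _ ⟨x, hx, rfl⟩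
    exact (hperp _).mpr fun z hz => dot4_mulVec_K'm_eq_zero hE hz hx
  have hdisj : Ep ⊓ E = ⊥ := (Submodule.eq_bot_iff _).mpr fun z ⟨hzp, hzE⟩ =>
    dotProduct_self_eq_zero.mp ((hperp z).mp hzp z hzE)
  have hdim : finrank ℝ Ep ≤ 2 := by
    have hsum := Submodule.finrank_sup_add_finrank_inf_eq Ep E
    have hsup := (Ep ⊔ E).finrank_le
    rw [hdisj, finrank_bot, hE.1] at hsum
    rw [Module.finrank_fin_fun] at hsup
    omega
  have hmap := hE.isComplexLine.map K'_sq K'_J_anticomm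
  exact (eq_of_le_of_finrank_le hle (hdim.trans hmap.1.ge)).symm

lemma mem_lagLocus_iff_inf_ne_bot {E F : Submodule ℝ (Fin 4 → ℝ)} (hE : IsJLine E) :
    F ∈ LagLocus E ↔ IsK'Line F ∧ F ⊓ E ≠ ⊥ := by
  refine and_congr_right fun hF => ?_
  rw [Ne, ← Submodule.finrank_eq_zero]
  have := hF.isComplexLine.finrank_inf_le_one K'_sq J_sq J_K'_anticomm hE
  omega

lemma mem_lagLocus_iff {E F : Submodule ℝ (Fin 4 → ℝ)} (hE : IsJLine E) :
    F ∈ LagLocus E ↔ ∃ w ∈ E, w ≠ 0 ∧ F = complexLine 𝐊 w := by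
  rw [mem_lagLocus_iff_inf_ne_bot hE]
  constructor
  · rintro ⟨hF, h⟩
    obtain ⟨w, ⟨hwF, hwE⟩, hw⟩ := (Submodule.ne_bot_iff _).mp h
    exact ⟨w, hwE, hw, hF.isComplexLine.eq_complexLine K'_sq hwF hw⟩
  · rintro ⟨w, hwE, hw, rfl⟩
    exact ⟨isComplexLine_complexLine K'_sq hw,
      (Submodule.ne_bot_iff _).mpr ⟨w, ⟨self_mem_complexLine, hwE⟩, hw⟩⟩

lemma lagLocus_map_K' {E : Submodule ℝ (Fin 4 → ℝ)} (hE : IsJLine E) :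
    LagLocus (E.map 𝐊) = LagLocus E := by
  have hinj : Function.Injective 𝐊 := injective_of_apply_apply_eq_neg_s8 K'_sq
  ext F
  rw [mem_lagLocus_iff (hE.isComplexLine.map K'_sq K'_J_anticomm), mem_lagLocus_iff hE]
  constructor
  · rintro ⟨_, ⟨x, hx, rfl⟩, hx0, rfl⟩
    exact ⟨x, hx, (map_ne_zero_iff _ hinj).mp hx0, complexLine_apply K'_sq⟩
  · rintro ⟨x, hx, hx0, rfl⟩
    exact ⟨𝐊 x, mem_map_of_mem hx, (map_ne_zero_iff _ hinj).mpr hx0,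
      (complexLine_apply K'_sq).symm⟩

lemma lagLocus_inter_lagLocus_eq {E E' : Submodule ℝ (Fin 4 → ℝ)} (hE : IsJLine E)
    (hE' : IsJLine E') {v : Fin 4 → ℝ} (hvE : v ∈ E) (hv : v ≠ 0) {r : ℝ} (hr : r ≠ 0)
    (hvE' : 𝐊 v + r • v ∈ E') :
    LagLocus E ∩ LagLocus E' = {complexLine 𝐊 v, complexLine 𝐊 (𝐉 v)} := by
  have hEv := hE.isComplexLine.eq_complexLine J_sq hvE hv
  have hE'v := hE'.isComplexLine.eq_complexLine J_sq hvE'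
    (apply_add_smul_ne_zero J_sq K'_sq K'_J_anticomm hv r)
  have hE'_iff : ∀ w ∈ E, w ≠ 0 → (complexLine 𝐊 w ∈ LagLocus E' ↔
      complexLine 𝐊 w = complexLine 𝐊 v ∨ complexLine 𝐊 w = complexLine 𝐊 (𝐉 v)) := by
    intro w hwE hw
    rw [hEv] at hwE
    rw [mem_lagLocus_iff_inf_ne_bot hE', hE'v,
      ← complexLine_inf_ne_bot_iff J_sq K'_sq K'_J_anticomm hv hr hwE hw]
    exact and_iff_right (isComplexLine_complexLine K'_sq hw)
  ext F
  rw [Set.mem_inter_iff, mem_lagLocus_iff hE, Set.mem_insert_iff, Set.mem_singleton_iff]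
  constructor
  · rintro ⟨⟨w, hwE, hw, rfl⟩, hF'⟩
    exact (hE'_iff w hwE hw).mp hF'
  · have hJv : 𝐉 v ≠ 0 := (map_ne_zero_iff _ (injective_of_apply_apply_eq_neg_s8 J_sq)).mpr hv
    rintro (rfl | rfl)
    · exact ⟨⟨v, hvE, hv, rfl⟩, (hE'_iff v hvE hv).mpr (Or.inl rfl)⟩
    · exact ⟨⟨𝐉 v, hE.2 v hvE, hJv, rfl⟩, (hE'_iff _ (hE.2 v hvE) hJv).mpr (Or.inr rfl)⟩

/-- For distinct `J`-complex lines `E ≠ E'`: if `E' = E^⊥` then `Λ⁺_E = Λ⁺_{E'}`,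
and if `E' ≠ E^⊥` then `Λ⁺_E ∩ Λ⁺_{E'}` consists of exactly two `K'`-complex planes. -/
theorem lagrangian_loci_intersection
    (E E' Ep : Submodule ℝ (Fin 4 → ℝ))
    (hE : IsJLine E) (hE' : IsJLine E') (hne : E ≠ E')
    (hperp : ∀ w, w ∈ Ep ↔ ∀ z ∈ E, dot4 z w = 0) :
    (E' = Ep → LagLocus E = LagLocus E') ∧
    (E' ≠ Ep → ∃ F₁ F₂ : Submodule ℝ (Fin 4 → ℝ), F₁ ≠ F₂ ∧
      ∀ F, F ∈ LagLocus E ∩ LagLocus E' ↔ F = F₁ ∨ F = F₂) := by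
  have hEp : Ep = E.map 𝐊 := perp_eq_map_K' hE hperp
  refine ⟨fun h => by rw [h, hEp, lagLocus_map_K' hE], fun hE'Ep => ?_⟩
  obtain ⟨v₀, hv₀E, hv₀⟩ := hE.isComplexLine.exists_ne_zero
  have hE₀ := hE.isComplexLine.eq_complexLine J_sq hv₀E hv₀
  obtain ⟨p, q, hpq⟩ := hE'.isComplexLine.exists_apply_add_mem J_sq K'_sq K'_J_anticomm
    (finrank_fin_fun ℝ) hv₀ (hE₀ ▸ hE.isComplexLine.inf_eq_bot J_sq hE' hne)
  have hpq₀ : p ≠ 0 ∨ q ≠ 0 := by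
    by_contra! h
    obtain ⟨rfl, rfl⟩ := h
    exact hE'Ep (hEp ▸ hE.isComplexLine.eq_map_of_apply_mem J_sq K'_sq K'_J_anticomm hE'
      hv₀E hv₀ (by simpa using hpq))
  obtain ⟨v, hvE, hv, r, hr, hvE'⟩ :=
    hE'.isComplexLine.exists_apply_add_smul_self_mem J_sq K'_J_anticomm hv₀ hpq₀ hpq
  refine ⟨_, _, complexLine_ne_complexLine_apply J_sq K'_sq K'_J_anticomm hv, fun F => ?_⟩
  rw [lagLocus_inter_lagLocus_eq hE hE' (hE₀ ▸ hvE) hv hr hvE', Set.mem_insert_iff,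
    Set.mem_singleton_iff]
end

section
/- For real parameters t, φ, θ, τ, the determinant of the 4×4 matrix whose columns are (cos(t+φ)cos θ, cos(t+φ)sin θ, sin(t+φ)cos θ, sin(t+φ)sin θ), (−cos t sin θ, cos t cos θ, −sin t sin θ, sin t cos θ), (cos τ, sin τ, 0, 0), and (0, 0, cos τ, sin τ) equals (1/2) sin φ · sin(2(θ − τ)). -/
/-!
In `ℝ² ⊗ ℝ²` the columns are `a ⊗ u`, `b ⊗ v`, `e₀ ⊗ w`, `e₁ ⊗ w` with `a = (cos (t + φ), sin (t + φ))`,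
`b = (cos t, sin t)`, `u = (cos θ, sin θ)`, `v = (-sin θ, cos θ)`, `w = (cos τ, sin τ)`.
Such a determinant factors as `det (a, b) · det (u, w) · det (w, v)`, and the three factors are
`-sin φ`, `-sin (θ - τ)` and `cos (θ - τ)`.
-/

open Real

theorem Matrix.det_fin_four_of_kronecker_columns {R : Type*} [CommRing R]
    (a₀ a₁ b₀ b₁ u₀ u₁ v₀ v₁ w₀ w₁ : R) :
    Matrix.det !![a₀ * u₀, b₀ * v₀, w₀, 0;
                  a₀ * u₁, b₀ * v₁, w₁, 0;
                  a₁ * u₀, b₁ * v₀, 0, w₀;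
                  a₁ * u₁, b₁ * v₁, 0, w₁] =
      (a₀ * b₁ - a₁ * b₀) * (u₀ * w₁ - u₁ * w₀) * (w₀ * v₁ - w₁ * v₀) := by
  rw [Matrix.det_succ_row_zero, Fin.sum_univ_four]
  simp only [Matrix.det_fin_three, Matrix.submatrix_apply, Fin.succAbove, Fin.reduceSucc,
    Fin.reduceCastSucc, Fin.reduceLT, ite_true, ite_false, Matrix.of_apply, Matrix.cons_val,
    Fin.val_zero, Fin.val_one, Fin.val_two]
  ring

/-- The determinant of the 4×4 matrix with columns
`(cos(t+φ)cosθ, cos(t+φ)sinθ, sin(t+φ)cosθ, sin(t+φ)sinθ)`,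
`(−cos t sinθ, cos t cosθ, −sin t sinθ, sin t cosθ)`,
`(cos τ, sin τ, 0, 0)` and `(0, 0, cos τ, sin τ)` equals `(1/2) sin φ sin(2(θ−τ))`. -/
theorem det_formula (t φ θ τ : ℝ) :
    Matrix.det
      !![Real.cos (t + φ) * Real.cos θ, -(Real.cos t * Real.sin θ), Real.cos τ, 0;
         Real.cos (t + φ) * Real.sin θ, Real.cos t * Real.cos θ, Real.sin τ, 0;
         Real.sin (t + φ) * Real.cos θ, -(Real.sin t * Real.sin θ), 0, Real.cos τ;
         Real.sin (t + φ) * Real.sin θ, Real.sin t * Real.cos θ, 0, Real.sin τ] =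
      (1 / 2) * Real.sin φ * Real.sin (2 * (θ - τ)) := by
  simp only [← mul_neg]
  rw [Matrix.det_fin_four_of_kronecker_columns]
  have hab : cos (t + φ) * sin t - sin (t + φ) * cos t = -sin φ := by
    rw [← sin_neg, show -φ = t - (t + φ) by ring, sin_sub]
    ring
  have huw : cos θ * sin τ - sin θ * cos τ = -sin (θ - τ) := by
    rw [sin_sub]
    ring
  have hwv : cos τ * cos θ - sin τ * -sin θ = cos (θ - τ) := by
    rw [cos_sub]
    ring
  rw [hab, huw, hwv, sin_two_mul]
  ring
end

section
/- Let γ be the closed curve traversing once the cardioid-like plane curve defined by y₁² − x₁²/2 + x₁⁴/4 = 0 with x₁ ≥ 0 (an immersed closed curve through the origin). Along one full traversal of γ, the total variation Δφ of the angle φ from the position vector γ(s) to the tangent vector γ'(s) equals π. -/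
open Real


set_option maxHeartbeats 1000000 in
private theorem aux_whitney_sin_bound (X Y DX DY r S C : ℝ)
    (hxp : 0 < X) (hxle1 : X ≤ 1) (hdx : DX ≠ 0)
    (hcurve : Y^2 - X^2/2 + X^4/4 = 0)
    (hkey : 2*Y*DY = X*DX*(1 - X^2))
    (hpyth : S^2 + C^2 = 1)
    (hc : X*DY - Y*DX = r*S*(X^2+Y^2))
    (hd : X*DX + Y*DY = r*C*(X^2+Y^2)) :
    S^2 ≤ X^4/4 := by
  have hx21 : X^2 ≤ 1 := by nlinarith
  have hy2 : X^2 ≤ 4*Y^2 := by nlinarith [pow_pos hxp 2]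
  have hd_eq : X*DX + Y*DY = X*DX*(3 - X^2)/2 := by linarith
  have h4 : 4 ≤ (3 - X^2)^2 := by nlinarith
  have hd2 : X^2*DX^2 ≤ (X*DX + Y*DY)^2 := by
    rw [hd_eq]
    nlinarith [mul_le_mul_of_nonneg_left h4 (sq_nonneg (X*DX))]
  have hcd : (X*DY - Y*DX) * C = (X*DX + Y*DY) * S := by
    rw [hc, hd]; ring
  have hsin2 : S^2 * (X*DX + Y*DY)^2 ≤ (X*DY - Y*DX)^2 := by
    have hh : ((X*DX + Y*DY) * S)^2 = (X*DY - Y*DX)^2 * C^2 := by rw [← hcd]; ring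
    nlinarith [sq_nonneg (X*DY - Y*DX), sq_nonneg S]
  have hc4y : (X*DY - Y*DX) * (4*Y) = -(X^4)*DX := by
    linear_combination 2*X*hkey - 4*DX*hcurve
  have hcb : ((X*DY - Y*DX) * (4*Y))^2 = (-(X^4)*DX)^2 := by rw [hc4y]
  have hc2 : 4*(X*DY - Y*DX)^2 * X^2 ≤ X^8*DX^2 := by
    nlinarith [sq_nonneg (X*DY - Y*DX)]
  have he1 : S^2 * (X^2*DX^2) ≤ (X*DY - Y*DX)^2 := by
    nlinarith [sq_nonneg S]
  have hmul := mul_le_mul_of_nonneg_left he1 (show (0:ℝ) ≤ 4*X^2 by positivity)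
  have he2 : 4*S^2*X^4*DX^2 ≤ X^8*DX^2 := by
    ring_nf at hmul hc2 ⊢
    linarith
  have hpos : 0 < X^4*DX^2 := by
    have : 0 < DX^2 := by positivity
    positivity
  nlinarith [he2, hpos]

private theorem aux_whitney_cos_sign (X Y DX DY r C : ℝ)
    (hxp : 0 < X) (hx2 : X^2 ≤ 2)
    (hkey : 2*Y*DY = X*DX*(1 - X^2))
    (hd : X*DX + Y*DY = r*C*(X^2+Y^2))
    (hr : 0 < r) (hM : 0 < X^2+Y^2)
    (hdx : 0 < DX) : 0 < C := by
  have hdpos : 0 < X*DX + Y*DY := by nlinarith [mul_pos hxp hdx]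
  rw [hd] at hdpos
  nlinarith [mul_pos hr hM]

private theorem aux_whitney_cos_sign' (X Y DX DY r C : ℝ)
    (hxp : 0 < X) (hx2 : X^2 ≤ 2)
    (hkey : 2*Y*DY = X*DX*(1 - X^2))
    (hd : X*DX + Y*DY = r*C*(X^2+Y^2))
    (hr : 0 < r) (hM : 0 < X^2+Y^2)
    (hdx : DX < 0) : C < 0 := by
  have hdneg : X*DX + Y*DY < 0 := by nlinarith [mul_pos hxp (neg_pos.mpr hdx)]
  rw [hd] at hdneg
  nlinarith [mul_pos hr hM]

set_option maxHeartbeats 4000000 in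
/-- Let `γ : [0,1] → ℝ²` traverse once, counterclockwise, the closed immersed curve
`y₁² − x₁²/2 + x₁⁴/4 = 0`, `x₁ ≥ 0`, based at the origin.  Let `φ(s)` be a continuous
determination on `(0,1)` of the angle of counterclockwise rotation from the position vector
`γ(s)` to the tangent vector `γ'(s)`.  Then the total variation of `φ` along one traversal
equals `π`. -/
theorem whitney_curve_angle_variation
    (γ : ℝ → ℝ × ℝ) (hγ : ContDiff ℝ (⊤ : ℕ∞) γ)
    (h0 : γ 0 = 0) (h1 : γ 1 = 0)
    (hne : ∀ s ∈ Set.Ioo (0 : ℝ) 1, γ s ≠ 0)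
    (honcurve : ∀ s ∈ Set.Icc (0 : ℝ) 1,
      ((γ s).2) ^ 2 - ((γ s).1) ^ 2 / 2 + ((γ s).1) ^ 4 / 4 = 0 ∧ 0 ≤ (γ s).1)
    (hinj : Set.InjOn γ (Set.Ioo 0 1))
    (hsurj : ∀ p : ℝ × ℝ, p.2 ^ 2 - p.1 ^ 2 / 2 + p.1 ^ 4 / 4 = 0 → 0 ≤ p.1 →
      ∃ s ∈ Set.Icc (0 : ℝ) 1, γ s = p)
    (himm : ∀ s, deriv γ s ≠ 0)
    (hccw : 0 < ∫ s in (0 : ℝ)..1,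
      ((γ s).1 * (deriv γ s).2 - (γ s).2 * (deriv γ s).1))
    (φ : ℝ → ℝ) (hφcont : ContinuousOn φ (Set.Ioo 0 1))
    (hφ : ∀ s ∈ Set.Ioo (0 : ℝ) 1, ∃ r : ℝ, 0 < r ∧
      deriv γ s = r • (Real.cos (φ s) * (γ s).1 - Real.sin (φ s) * (γ s).2,
                       Real.sin (φ s) * (γ s).1 + Real.cos (φ s) * (γ s).2))
    (φ₀ φ₁ : ℝ)
    (hlim0 : Filter.Tendsto φ (nhdsWithin 0 (Set.Ioi 0)) (nhds φ₀))
    (hlim1 : Filter.Tendsto φ (nhdsWithin 1 (Set.Iio 1)) (nhds φ₁)) :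
    φ₁ - φ₀ = π := by
  have hpi := Real.pi_pos
  have hdiff : Differentiable ℝ γ := hγ.differentiable (by simp)
  have hx : ∀ s, HasDerivAt (fun t => (γ t).1) (deriv γ s).1 s :=
    fun s => (hdiff s).hasDerivAt.fst
  have hy : ∀ s, HasDerivAt (fun t => (γ t).2) (deriv γ s).2 s :=
    fun s => (hdiff s).hasDerivAt.snd
  -- x is positive on the open interval
  have hxpos : ∀ s ∈ Set.Ioo (0:ℝ) 1, 0 < (γ s).1 := by
    intro s hs
    rcases (honcurve s (Set.Ioo_subset_Icc_self hs)) with ⟨heq, hge⟩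
    rcases hge.lt_or_eq with h | h
    · exact h
    · exfalso
      apply hne s hs
      have hy0 : (γ s).2 = 0 := by nlinarith
      have : γ s = ((γ s).1, (γ s).2) := rfl
      rw [this, ← h, hy0]; rfl
  -- x² ≤ 2 on the closed interval
  have hxle : ∀ s ∈ Set.Icc (0:ℝ) 1, (γ s).1 ^ 2 ≤ 2 := by
    intro s hs
    rcases honcurve s hs with ⟨heq, hge⟩
    nlinarith [sq_nonneg ((γ s).2), sq_nonneg ((γ s).1)]
  -- derivative of the constraint
  have key : ∀ s ∈ Set.Ioo (0:ℝ) 1,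
      2*(γ s).2*(deriv γ s).2 = (γ s).1*(deriv γ s).1*(1 - (γ s).1^2) := by
    intro s hs
    have hG : HasDerivAt (fun t => (γ t).2^2 - (γ t).1^2/2 + (γ t).1^4/4)
        (2*(γ s).2*(deriv γ s).2 - (γ s).1*(deriv γ s).1 + (γ s).1^3*(deriv γ s).1) s := by
      have h1 := (hy s).fun_pow 2
      have h2 := (hx s).fun_pow 2
      have h3 := (hx s).fun_pow 4
      refine ((h1.sub (h2.div_const 2)).add (h3.div_const 4)).congr_deriv ?_
      push_cast
      ring
    have hG0 : HasDerivAt (fun t => (γ t).2^2 - (γ t).1^2/2 + (γ t).1^4/4) 0 s := by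
      apply (hasDerivAt_const s (0:ℝ)).congr_of_eventuallyEq
      filter_upwards [Ioo_mem_nhds hs.1 hs.2] with t ht
      exact (honcurve t (Set.Ioo_subset_Icc_self ht)).1
    have h := hG.unique hG0
    linarith
  -- components of the angle condition
  have hφ' : ∀ s ∈ Set.Ioo (0:ℝ) 1, ∃ r : ℝ, 0 < r ∧
      (γ s).1 * (deriv γ s).2 - (γ s).2 * (deriv γ s).1
        = r * Real.sin (φ s) * ((γ s).1^2 + (γ s).2^2) ∧
      (γ s).1 * (deriv γ s).1 + (γ s).2 * (deriv γ s).2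
        = r * Real.cos (φ s) * ((γ s).1^2 + (γ s).2^2) := by
    intro s hs
    obtain ⟨r, hr, heq⟩ := hφ s hs
    refine ⟨r, hr, ?_, ?_⟩ <;>
    · rw [heq]
      simp only [Prod.smul_mk, smul_eq_mul]
      ring
  have hM : ∀ s ∈ Set.Ioo (0:ℝ) 1, 0 < (γ s).1^2 + (γ s).2^2 := by
    intro s hs
    have := hxpos s hs
    positivity
  -- cross product identity : c * 4y = -x⁴ x'
  have c4y : ∀ s ∈ Set.Ioo (0:ℝ) 1,
      ((γ s).1 * (deriv γ s).2 - (γ s).2 * (deriv γ s).1) * (4 * (γ s).2)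
        = -((γ s).1^4) * (deriv γ s).1 := by
    intro s hs
    have hk := key s hs
    have hc := (honcurve s (Set.Ioo_subset_Icc_self hs)).1
    linear_combination 2*(γ s).1*hk - 4*(deriv γ s).1*hc
  -- the cross product never vanishes on (0,1)
  have hderiv_ne : ∀ s, (deriv γ s).1 = 0 → (deriv γ s).2 ≠ 0 := by
    intro s h1 h2
    exact himm s (Prod.ext h1 h2)
  have hcne : ∀ s ∈ Set.Ioo (0:ℝ) 1,
      (γ s).1 * (deriv γ s).2 - (γ s).2 * (deriv γ s).1 ≠ 0 := by
    intro s hs hczero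
    rcases honcurve s (Set.Ioo_subset_Icc_self hs) with ⟨hcurve, _⟩
    have hxp := hxpos s hs
    by_cases hy0 : (γ s).2 = 0
    · -- the point (√2, 0): x has an interior maximum, so x' = 0 and c = x y' ≠ 0
      rw [hy0] at hcurve
      have hx2 : (γ s).1^2 = 2 := by nlinarith [pow_pos hxp 2]
      have hmax : IsLocalMax (fun t => (γ t).1) s := by
        filter_upwards [Ioo_mem_nhds hs.1 hs.2] with t ht
        have h2 := hxle t (Set.Ioo_subset_Icc_self ht)
        have h0' := (honcurve t (Set.Ioo_subset_Icc_self ht)).2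
        show (γ t).1 ≤ (γ s).1
        nlinarith
      have hx'0 : (deriv γ s).1 = 0 := hmax.hasDerivAt_eq_zero (hx s)
      have hy' : (deriv γ s).2 ≠ 0 := hderiv_ne s hx'0
      apply hy'
      rw [hy0, hx'0] at hczero
      have : (γ s).1 * (deriv γ s).2 = 0 := by linarith
      rcases mul_eq_zero.mp this with h | h
      · exact absurd h (ne_of_gt hxp)
      · exact h
    · -- y ≠ 0 : c·4y = -x⁴ x' forces x' = 0, then the constraint forces y' = 0
      have hcc := c4y s hs
      rw [hczero, zero_mul] at hcc
      have hx4 : 0 < (γ s).1^4 := by positivity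
      have hx'0 : (deriv γ s).1 = 0 := by
        by_contra h
        have : -((γ s).1^4) * (deriv γ s).1 ≠ 0 := by
          apply mul_ne_zero _ h
          exact neg_ne_zero.mpr (ne_of_gt hx4)
        exact this hcc.symm
      have hk := key s hs
      rw [hx'0] at hk
      have hy'0 : (deriv γ s).2 = 0 := by
        have h2 : 2*(γ s).2*(deriv γ s).2 = 0 := by linarith [hk]
        rcases mul_eq_zero.mp h2 with h | h
        · rcases mul_eq_zero.mp h with h' | h'
          · norm_num at h'
          · exact absurd h' hy0
        · exact h
      exact hderiv_ne s hx'0 hy'0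
  -- sin (φ s) ≠ 0 on (0,1)
  have hsinne : ∀ s ∈ Set.Ioo (0:ℝ) 1, Real.sin (φ s) ≠ 0 := by
    intro s hs h
    obtain ⟨r, hr, hc, hd⟩ := hφ' s hs
    apply hcne s hs
    rw [hc, h]; ring
  have hnotint : ∀ s ∈ Set.Ioo (0:ℝ) 1, ∀ n : ℤ, φ s ≠ n * π := by
    intro s hs n h
    exact hsinne s hs (by rw [h]; exact Real.sin_int_mul_pi n)
  have hhalf : (1/2:ℝ) ∈ Set.Ioo (0:ℝ) 1 := by norm_num
  set m : ℤ := ⌊φ (1/2) / π⌋ with hmdef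
  have hm_lb : (m:ℝ) * π < φ (1/2) := by
    have h2 : (m:ℝ)*π ≤ φ (1/2) := by
      rw [← le_div_iff₀ hpi]; exact Int.floor_le _
    rcases h2.lt_or_eq with h | h
    · exact h
    · exact absurd h.symm (hnotint _ hhalf m)
  have hm_ub : φ (1/2) < ((m:ℝ)+1) * π := by
    rw [← div_lt_iff₀ hpi]
    exact Int.lt_floor_add_one _
  have hrange : ∀ s ∈ Set.Ioo (0:ℝ) 1, (m:ℝ)*π < φ s ∧ φ s < ((m:ℝ)+1)*π := by
    intro s hs
    have hsub : Set.uIcc s (1/2:ℝ) ⊆ Set.Ioo (0:ℝ) 1 :=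
      (Set.ordConnected_Ioo).uIcc_subset hs hhalf
    have hcont' : ContinuousOn φ (Set.uIcc s (1/2)) := hφcont.mono hsub
    constructor
    · by_contra hle
      push_neg at hle
      have hmem : (m:ℝ)*π ∈ Set.uIcc (φ s) (φ (1/2)) := by
        rw [Set.mem_uIcc]; left; exact ⟨hle, hm_lb.le⟩
      obtain ⟨t, ht, hφt⟩ := intermediate_value_uIcc hcont' hmem
      exact hnotint t (hsub ht) m hφt
    · by_contra hle
      push_neg at hle
      have hmem : ((m:ℝ)+1)*π ∈ Set.uIcc (φ s) (φ (1/2)) := by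
        rw [Set.mem_uIcc]; right; exact ⟨hm_ub.le, hle⟩
      obtain ⟨t, ht, hφt⟩ := intermediate_value_uIcc hcont' hmem
      refine hnotint t (hsub ht) (m+1) ?_
      rw [hφt]; push_cast; ring
  -- the sign of sin (φ s) is constantly (-1)^m on (0,1)
  have hsin_sign : ∀ s ∈ Set.Ioo (0:ℝ) 1,
      Real.sin (φ s) = (-1)^m * Real.sin (φ s - m*π) ∧ 0 < Real.sin (φ s - m*π) := by
    intro s hs
    obtain ⟨hl, hu⟩ := hrange s hs
    constructor
    · have h : φ s = (φ s - m*π) + m*π := by ring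
      rw [h, Real.sin_add, Real.sin_int_mul_pi]
      have hc : Real.cos ((m:ℝ) * π) = (-1)^m := by
        simpa using Real.cos_int_mul_pi_sub 0 m
      rw [hc]; ring
    · apply Real.sin_pos_of_pos_of_lt_pi <;> nlinarith
  -- counterclockwise orientation forces m even
  have hmeven : (-1:ℝ)^m = 1 := by
    rcases Int.even_or_odd m with he | ho
    · exact Even.neg_one_zpow he
    · exfalso
      have hneg : (-1:ℝ)^m = -1 := Odd.neg_one_zpow ho
      have hcnp : ∀ s ∈ Set.Icc (0:ℝ) 1,
          (γ s).1 * (deriv γ s).2 - (γ s).2 * (deriv γ s).1 ≤ 0 := by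
        intro s hs
        rcases eq_or_lt_of_le hs.1 with h | h
        · rw [← h, h0]; simp
        rcases eq_or_lt_of_le hs.2 with h' | h'
        · rw [h', h1]; simp
        have hsIoo : s ∈ Set.Ioo (0:ℝ) 1 := ⟨h, h'⟩
        obtain ⟨r, hr, hc, _⟩ := hφ' s hsIoo
        obtain ⟨hsgn, hspos⟩ := hsin_sign s hsIoo
        rw [hc, hsgn, hneg]
        have hMp := hM s hsIoo
        nlinarith [mul_pos (mul_pos hr hspos) hMp]
      have hint : (∫ s in (0:ℝ)..1,
          ((γ s).1 * (deriv γ s).2 - (γ s).2 * (deriv γ s).1)) ≤ 0 := by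
        have hnn := intervalIntegral.integral_nonneg (μ := MeasureTheory.volume)
          (f := fun s => -((γ s).1 * (deriv γ s).2 - (γ s).2 * (deriv γ s).1))
          zero_le_one (fun u hu => by simpa using hcnp u hu)
        rw [intervalIntegral.integral_neg] at hnn
        linarith
      linarith
  have hx0 : (γ 0).1 = 0 := by rw [h0]; rfl
  have hy0c : (γ 0).2 = 0 := by rw [h0]; rfl
  have hx1 : (γ 1).1 = 0 := by rw [h1]; rfl
  have hy1c : (γ 1).2 = 0 := by rw [h1]; rfl
  have habsyx : ∀ s ∈ Set.Ioo (0:ℝ) 1, |(γ s).2| ≤ (γ s).1 := by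
    intro t ht
    have hxt := hxpos t ht
    rcases honcurve t (Set.Ioo_subset_Icc_self ht) with ⟨heq, _⟩
    apply abs_le.mpr
    constructor <;> nlinarith [sq_nonneg ((γ t).1^2)]
  -- the curve leaves the origin to the right : x'(0) > 0
  have hx'0pos : 0 < (deriv γ 0).1 := by
    have hsx : Filter.Tendsto (slope (fun t => (γ t).1) 0)
        (nhdsWithin 0 (Set.Ioi 0)) (nhds (deriv γ 0).1) :=
      (hasDerivAt_iff_tendsto_slope.mp (hx 0)).mono_left
        (nhdsWithin_mono 0 (fun t ht => ne_of_gt ht))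
    have hsy : Filter.Tendsto (fun u => |slope (fun t => (γ t).2) 0 u|)
        (nhdsWithin 0 (Set.Ioi 0)) (nhds |(deriv γ 0).2|) :=
      ((hasDerivAt_iff_tendsto_slope.mp (hy 0)).mono_left
        (nhdsWithin_mono 0 (fun t ht => ne_of_gt ht))).abs
    have hioo : Set.Ioo (0:ℝ) 1 ∈ nhdsWithin (0:ℝ) (Set.Ioi 0) :=
      Ioo_mem_nhdsGT_of_mem ⟨le_refl 0, zero_lt_one⟩
    have hle : |(deriv γ 0).2| ≤ (deriv γ 0).1 := by
      apply le_of_tendsto_of_tendsto hsy hsx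
      filter_upwards [hioo] with t ht
      rw [slope_def_field, slope_def_field, hx0, hy0c, abs_div,
        abs_of_pos (by linarith [ht.1] : (0:ℝ) < t - 0)]
      gcongr
      · linarith [ht.1]
      · simpa using habsyx t ht
    rcases ((abs_nonneg ((deriv γ 0).2)).trans hle).lt_or_eq with h | h
    · exact h
    · exfalso
      rw [← h] at hle
      exact hderiv_ne 0 h.symm (abs_eq_zero.mp (le_antisymm hle (abs_nonneg _)))
  -- the curve returns to the origin from the right : x'(1) < 0
  have hx'1neg : (deriv γ 1).1 < 0 := by
    have hsx : Filter.Tendsto (fun u => -(slope (fun t => (γ t).1) 1 u))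
        (nhdsWithin 1 (Set.Iio 1)) (nhds (-(deriv γ 1).1)) :=
      ((hasDerivAt_iff_tendsto_slope.mp (hx 1)).mono_left
        (nhdsWithin_mono 1 (fun t ht => ne_of_lt ht))).neg
    have hsy : Filter.Tendsto (fun u => |slope (fun t => (γ t).2) 1 u|)
        (nhdsWithin 1 (Set.Iio 1)) (nhds |(deriv γ 1).2|) :=
      ((hasDerivAt_iff_tendsto_slope.mp (hy 1)).mono_left
        (nhdsWithin_mono 1 (fun t ht => ne_of_lt ht))).abs
    have hioo : Set.Ioo (0:ℝ) 1 ∈ nhdsWithin (1:ℝ) (Set.Iio 1) :=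
      Ioo_mem_nhdsLT_of_mem ⟨zero_lt_one, le_refl 1⟩
    have hle : |(deriv γ 1).2| ≤ -(deriv γ 1).1 := by
      apply le_of_tendsto_of_tendsto hsy hsx
      filter_upwards [hioo] with t ht
      rw [slope_def_field, slope_def_field, hx1, hy1c]
      have ht1 : t - 1 < 0 := by linarith [ht.2]
      rw [abs_div, abs_of_neg ht1]
      rw [div_le_iff₀ (by linarith : (0:ℝ) < -(t-1))]
      have hne1 : t - 1 ≠ 0 := ne_of_lt ht1
      have h3 : -(((γ t).1 - 0) / (t - 1)) * -(t-1) = (γ t).1 := by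
        field_simp
        ring
      rw [h3]
      simpa using habsyx t ht
    rcases ((abs_nonneg ((deriv γ 1).2)).trans hle).lt_or_eq with h | h
    · linarith
    · exfalso
      have hx1' : (deriv γ 1).1 = 0 := by linarith
      rw [hx1'] at hle
      simp at hle
      exact hderiv_ne 1 hx1' hle
  -- bound on sin φ :  sin²(φ s) ≤ x⁴/4  when x ≤ 1 and x' ≠ 0
  have hsinbound : ∀ s ∈ Set.Ioo (0:ℝ) 1, (deriv γ s).1 ≠ 0 → (γ s).1 ≤ 1 →
      Real.sin (φ s)^2 ≤ (γ s).1^4 / 4 := by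
    intro s hs hx'ne hxle1
    obtain ⟨r, hr, hc, hd⟩ := hφ' s hs
    exact aux_whitney_sin_bound (γ s).1 (γ s).2 (deriv γ s).1 (deriv γ s).2 r
      (Real.sin (φ s)) (Real.cos (φ s)) (hxpos s hs) hxle1 hx'ne
      ((honcurve s (Set.Ioo_subset_Icc_self hs)).1) (key s hs)
      (Real.sin_sq_add_cos_sq (φ s)) hc hd
  -- sign of cos φ is the sign of x'
  have hcos_pos : ∀ s ∈ Set.Ioo (0:ℝ) 1, 0 < (deriv γ s).1 → 0 < Real.cos (φ s) := by
    intro s hs hx'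
    obtain ⟨r, hr, _, hd⟩ := hφ' s hs
    exact aux_whitney_cos_sign (γ s).1 (γ s).2 (deriv γ s).1 (deriv γ s).2 r
      (Real.cos (φ s)) (hxpos s hs) (hxle s (Set.Ioo_subset_Icc_self hs))
      (key s hs) hd hr (hM s hs) hx'
  have hcos_neg : ∀ s ∈ Set.Ioo (0:ℝ) 1, (deriv γ s).1 < 0 → Real.cos (φ s) < 0 := by
    intro s hs hx'
    obtain ⟨r, hr, _, hd⟩ := hφ' s hs
    exact aux_whitney_cos_sign' (γ s).1 (γ s).2 (deriv γ s).1 (deriv γ s).2 r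
      (Real.cos (φ s)) (hxpos s hs) (hxle s (Set.Ioo_subset_Icc_self hs))
      (key s hs) hd hr (hM s hs) hx'
  have hcontd : Continuous (deriv γ) := hγ.continuous_deriv (by simp)
  have hx'cont : Continuous (fun s => (deriv γ s).1) := continuous_fst.comp hcontd
  have hxcont : Continuous (fun s => (γ s).1) := continuous_fst.comp hγ.continuous
  -- eventual facts near 0
  have hev0Ioo : ∀ᶠ s in nhdsWithin (0:ℝ) (Set.Ioi 0), s ∈ Set.Ioo (0:ℝ) 1 :=
    Ioo_mem_nhdsGT_of_mem ⟨le_refl 0, zero_lt_one⟩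
  have hev0x' : ∀ᶠ s in nhdsWithin (0:ℝ) (Set.Ioi 0), 0 < (deriv γ s).1 :=
    ((hx'cont.tendsto 0).eventually (eventually_gt_nhds hx'0pos)).filter_mono
      nhdsWithin_le_nhds
  have hev0x : ∀ᶠ s in nhdsWithin (0:ℝ) (Set.Ioi 0), (γ s).1 ≤ 1 := by
    have h := hxcont.tendsto 0
    rw [hx0] at h
    exact ((h.eventually (eventually_lt_nhds zero_lt_one)).mono
      (fun s hs => hs.le)).filter_mono nhdsWithin_le_nhds
  -- sin φ tends to 0 at 0⁺
  have hsq0 : Filter.Tendsto (fun s => (γ s).1^2/2) (nhdsWithin 0 (Set.Ioi 0)) (nhds 0) := by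
    have h : Filter.Tendsto (fun s => (γ s).1^2/2) (nhds 0) (nhds ((γ 0).1^2/2)) :=
      ((hxcont.pow 2).div_const 2).tendsto 0
    rw [hx0] at h
    norm_num at h
    exact h.mono_left nhdsWithin_le_nhds
  have habs_sin : ∀ s ∈ Set.Ioo (0:ℝ) 1, (deriv γ s).1 ≠ 0 → (γ s).1 ≤ 1 →
      |Real.sin (φ s)| ≤ (γ s).1^2/2 := by
    intro s hs hne' hle1
    have hb := hsinbound s hs hne' hle1
    have hxp := hxpos s hs
    have hx2 : 0 < (γ s).1^2 := by positivity
    apply abs_le.mpr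
    constructor <;> nlinarith [hb, hx2]
  have hsin0 : Filter.Tendsto (fun s => Real.sin (φ s))
      (nhdsWithin 0 (Set.Ioi 0)) (nhds 0) := by
    apply squeeze_zero_norm' _ hsq0
    filter_upwards [hev0Ioo, hev0x', hev0x] with s hs hx' hle1
    exact habs_sin s hs (ne_of_gt hx') hle1
  have hsinφ0 : Real.sin φ₀ = 0 :=
    tendsto_nhds_unique ((Real.continuous_sin.tendsto φ₀).comp hlim0) hsin0
  have hcosφ0 : 0 ≤ Real.cos φ₀ := by
    apply ge_of_tendsto ((Real.continuous_cos.tendsto φ₀).comp hlim0)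
    filter_upwards [hev0Ioo, hev0x'] with s hs hx'
    exact (hcos_pos s hs hx').le
  have hφ0mem : (m:ℝ)*π ≤ φ₀ ∧ φ₀ ≤ ((m:ℝ)+1)*π := by
    constructor
    · apply ge_of_tendsto hlim0
      filter_upwards [hev0Ioo] with s hs using (hrange s hs).1.le
    · apply le_of_tendsto hlim0
      filter_upwards [hev0Ioo] with s hs using (hrange s hs).2.le
  -- eventual facts near 1
  have hev1Ioo : ∀ᶠ s in nhdsWithin (1:ℝ) (Set.Iio 1), s ∈ Set.Ioo (0:ℝ) 1 :=
    Ioo_mem_nhdsLT_of_mem ⟨zero_lt_one, le_refl 1⟩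
  have hev1x' : ∀ᶠ s in nhdsWithin (1:ℝ) (Set.Iio 1), (deriv γ s).1 < 0 :=
    ((hx'cont.tendsto 1).eventually (eventually_lt_nhds hx'1neg)).filter_mono
      nhdsWithin_le_nhds
  have hev1x : ∀ᶠ s in nhdsWithin (1:ℝ) (Set.Iio 1), (γ s).1 ≤ 1 := by
    have h := hxcont.tendsto 1
    rw [hx1] at h
    exact ((h.eventually (eventually_lt_nhds zero_lt_one)).mono
      (fun s hs => hs.le)).filter_mono nhdsWithin_le_nhds
  have hsq1 : Filter.Tendsto (fun s => (γ s).1^2/2) (nhdsWithin 1 (Set.Iio 1)) (nhds 0) := by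
    have h : Filter.Tendsto (fun s => (γ s).1^2/2) (nhds 1) (nhds ((γ 1).1^2/2)) :=
      ((hxcont.pow 2).div_const 2).tendsto 1
    rw [hx1] at h
    norm_num at h
    exact h.mono_left nhdsWithin_le_nhds
  have hsin1 : Filter.Tendsto (fun s => Real.sin (φ s))
      (nhdsWithin 1 (Set.Iio 1)) (nhds 0) := by
    apply squeeze_zero_norm' _ hsq1
    filter_upwards [hev1Ioo, hev1x', hev1x] with s hs hx' hle1
    exact habs_sin s hs (ne_of_lt hx') hle1
  have hsinφ1 : Real.sin φ₁ = 0 :=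
    tendsto_nhds_unique ((Real.continuous_sin.tendsto φ₁).comp hlim1) hsin1
  have hcosφ1 : Real.cos φ₁ ≤ 0 := by
    apply le_of_tendsto ((Real.continuous_cos.tendsto φ₁).comp hlim1)
    filter_upwards [hev1Ioo, hev1x'] with s hs hx'
    exact (hcos_neg s hs hx').le
  have hφ1mem : (m:ℝ)*π ≤ φ₁ ∧ φ₁ ≤ ((m:ℝ)+1)*π := by
    constructor
    · apply ge_of_tendsto hlim1
      filter_upwards [hev1Ioo] with s hs using (hrange s hs).1.le
    · apply le_of_tendsto hlim1
      filter_upwards [hev1Ioo] with s hs using (hrange s hs).2.le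
  -- cos values at integer multiples of π
  have hcosm : Real.cos ((m:ℝ)*π) = 1 := by
    have := Real.cos_int_mul_pi_sub 0 m
    simpa [hmeven] using this
  have hcosm1 : Real.cos (((m:ℝ)+1)*π) = -1 := by
    have h := Real.cos_int_mul_pi_sub 0 (m+1)
    have h2 : ((-1:ℝ))^(m+1) = -1 := by
      rw [zpow_add₀ (by norm_num : (-1:ℝ) ≠ 0) m 1, hmeven]
      norm_num
    push_cast at h
    simpa [h2] using h
  -- pin down φ₀ and φ₁
  have hpin : ∀ ψ : ℝ, Real.sin ψ = 0 → (m:ℝ)*π ≤ ψ → ψ ≤ ((m:ℝ)+1)*π →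
      ψ = (m:ℝ)*π ∨ ψ = ((m:ℝ)+1)*π := by
    intro ψ hsin hlb hub
    obtain ⟨n, hn⟩ := Real.sin_eq_zero_iff.mp hsin
    have h1 : (m:ℝ) ≤ (n:ℝ) := by
      have := hlb
      rw [← hn] at this
      exact le_of_mul_le_mul_right this hpi
    have h2 : (n:ℝ) ≤ (m:ℝ)+1 := by
      have := hub
      rw [← hn] at this
      exact le_of_mul_le_mul_right this hpi
    have h1' : m ≤ n := by exact_mod_cast h1
    have h2' : n ≤ m+1 := by exact_mod_cast h2
    have : n = m ∨ n = m + 1 := by omega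
    rcases this with h | h
    · left; rw [← hn, h]
    · right; rw [← hn, h]; push_cast; ring
  have hφ0eq : φ₀ = (m:ℝ)*π := by
    rcases hpin φ₀ hsinφ0 hφ0mem.1 hφ0mem.2 with h | h
    · exact h
    · exfalso
      rw [h, hcosm1] at hcosφ0
      linarith
  have hφ1eq : φ₁ = ((m:ℝ)+1)*π := by
    rcases hpin φ₁ hsinφ1 hφ1mem.1 hφ1mem.2 with h | h
    · exfalso
      rw [h, hcosm] at hcosφ1
      linarith
    · exact h
  rw [hφ0eq, hφ1eq]
  ring
end
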